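/- arXiv:2602.24195 — 3 statements merged into one kernel-verified Lean document; each statement's English description precedes it below -/
import Mathlib

section
/- Let m ≥ 1 and let w₁,…,w_m be nonnegative reals with Σ_j w_j = 1 (a probability vector over m modes). Fix β ∈ (0,1) and an integer r ≥ 2 with r·β ≤ 1. If at least r of the weights satisfy w_j ≥ β, then 1 − Σ_j w_j² ≥ 1 − (1 − (r−1)β)² − (r−1)β². Equivalently, Σ_j w_j² ≤ (1 − (r−1)β)² + (r−1)β², so a small quadratic entropy rules out the existence of r modes each carrying probability mass at least β. -/
/-- **Ruling out many high-mass modes.** Let `w` be a probability vector over `m` modes,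
`β ∈ (0,1)` and `r ≥ 2` an integer with `r β ≤ 1`. If at least `r` of the weights satisfy
`w_j ≥ β`, then the quadratic entropy satisfies
`1 - ∑_j w_j² ≥ 1 - (1 - (r-1)β)² - (r-1)β²`. -/
theorem quadratic_entropy_many_modes {m : ℕ} (hm : 1 ≤ m) (w : Fin m → ℝ)
    (hw : ∀ j, 0 ≤ w j) (hsum : ∑ j, w j = 1)
    (β : ℝ) (hβ : β ∈ Set.Ioo (0 : ℝ) 1) (r : ℕ) (hr : 2 ≤ r)
    (hrβ : (r : ℝ) * β ≤ 1)
    (hmany : r ≤ (Finset.univ.filter fun j => β ≤ w j).card) :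
    1 - ∑ j, (w j) ^ 2
      ≥ 1 - (1 - ((r : ℝ) - 1) * β) ^ 2 - ((r : ℝ) - 1) * β ^ 2 := by
  obtain ⟨hβ0, hβ1⟩ := hβ
  set T : Finset (Fin m) := Finset.univ.filter (fun j => β ≤ w j) with hT
  set A : ℝ := 1 - ((r : ℝ) - 1) * β with hA
  have hr1 : (2 : ℝ) ≤ (r : ℝ) := by exact_mod_cast hr
  have hA0 : 0 ≤ A := by simp only [hA]; nlinarith
  -- every weight is at most A
  have hwle : ∀ j, w j ≤ A := by
    intro j
    have hcard : r - 1 ≤ (T.erase j).card := by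
      have h1 : T.card - 1 ≤ (T.erase j).card := Finset.pred_card_le_card_erase
      omega
    have hcardR : ((r : ℝ) - 1) ≤ ((T.erase j).card : ℝ) := by
      have : ((r - 1 : ℕ) : ℝ) ≤ ((T.erase j).card : ℝ) := by exact_mod_cast hcard
      rw [Nat.cast_sub (by omega)] at this
      simpa using this
    have hβle : ∀ k ∈ T.erase j, β ≤ w k := by
      intro k hk
      have := Finset.mem_of_mem_erase hk
      simpa [hT] using this
    have hsum1 : ((T.erase j).card : ℝ) * β ≤ ∑ k ∈ T.erase j, w k := by
      have := Finset.card_nsmul_le_sum (T.erase j) w β hβle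
      simpa [nsmul_eq_mul] using this
    have hsub : ∑ k ∈ T.erase j, w k ≤ ∑ k ∈ Finset.univ.erase j, w k := by
      apply Finset.sum_le_sum_of_subset_of_nonneg
      · exact Finset.erase_subset_erase _ (Finset.filter_subset _ _)
      · intro k _ _; exact hw k
    have hrest : ∑ k ∈ Finset.univ.erase j, w k = 1 - w j := by
      have := Finset.add_sum_erase Finset.univ w (Finset.mem_univ j)
      linarith [this.symm ▸ hsum]
    have : ((r : ℝ) - 1) * β ≤ 1 - w j := by
      calc ((r : ℝ) - 1) * β ≤ ((T.erase j).card : ℝ) * β := by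
            apply mul_le_mul_of_nonneg_right hcardR (le_of_lt hβ0)
        _ ≤ ∑ k ∈ T.erase j, w k := hsum1
        _ ≤ ∑ k ∈ Finset.univ.erase j, w k := hsub
        _ = 1 - w j := hrest
    simp only [hA]; linarith
  -- split the sum
  have hsplit : ∑ j, (w j) ^ 2
      = ∑ j ∈ T, (w j) ^ 2 + ∑ j ∈ Finset.univ.filter (fun j => ¬ β ≤ w j), (w j) ^ 2 :=
    (Finset.sum_filter_add_sum_filter_not _ _ _).symm
  have hsplitw : ∑ j ∈ T, w j + ∑ j ∈ Finset.univ.filter (fun j => ¬ β ≤ w j), w j = 1 := by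
    rw [Finset.sum_filter_add_sum_filter_not]; exact hsum
  have h1 : ∑ j ∈ T, (w j) ^ 2
      ≤ (A + β) * (∑ j ∈ T, w j) - (T.card : ℝ) * (A * β) := by
    have : ∑ j ∈ T, (w j) ^ 2 ≤ ∑ j ∈ T, ((A + β) * w j - A * β) := by
      apply Finset.sum_le_sum
      intro j hj
      have hjβ : β ≤ w j := by simpa [hT] using hj
      have hjA : w j ≤ A := hwle j
      nlinarith
    simpa [Finset.sum_sub_distrib, Finset.mul_sum, Finset.sum_const, nsmul_eq_mul,
      mul_comm, mul_left_comm] using this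
  have h2 : ∑ j ∈ Finset.univ.filter (fun j => ¬ β ≤ w j), (w j) ^ 2
      ≤ A * ∑ j ∈ Finset.univ.filter (fun j => ¬ β ≤ w j), w j := by
    rw [Finset.mul_sum]
    apply Finset.sum_le_sum
    intro j _
    have := hw j
    have := hwle j
    nlinarith
  have ht1 : ∑ j ∈ T, w j ≤ 1 := by
    have h0 : 0 ≤ ∑ j ∈ Finset.univ.filter (fun j => ¬ β ≤ w j), w j :=
      Finset.sum_nonneg fun j _ => hw j
    linarith
  have hcardr : (r : ℝ) ≤ (T.card : ℝ) := by exact_mod_cast hmany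
  have hAβ : 0 ≤ A * β := mul_nonneg hA0 (le_of_lt hβ0)
  have hkey : ∑ j, (w j) ^ 2 ≤ A ^ 2 + ((r : ℝ) - 1) * β ^ 2 := by
    rw [hsplit]
    have hcardmul : (r : ℝ) * (A * β) ≤ (T.card : ℝ) * (A * β) :=
      mul_le_mul_of_nonneg_right hcardr hAβ
    have hAid : A = 1 - ((r : ℝ) - 1) * β := hA
    nlinarith [hsplitw, ht1, hβ0.le]
  linarith
end

section
/- Let k ≥ 1, d ≥ 1, ε > 0, fix an index i ∈ {1,…,k}, and let Φ, Φ′ ∈ ℝ^{k×d} be matrices all of whose rows have Euclidean norm 1 and which agree in every row except possibly row i. Then |log det(Φ′Φ′ᵀ + εI_k) − log det(ΦΦᵀ + εI_k)| ≤ log((1+ε)/ε). -/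
open Matrix

lemma det_updateColumn_of_row_single {n : Type*} [DecidableEq n] [Fintype n]
    (M : Matrix n n ℝ) (i : n) (h : M i = Pi.single i 1) :
    det (updateCol M i (Pi.single i 1)) = det M := by
  rw [det_apply, det_apply]
  refine Finset.sum_congr rfl fun σ _ => ?_
  by_cases hσ : σ i = i
  · congr 1
    refine Finset.prod_congr rfl fun j _ => ?_
    by_cases hj : j = i
    · subst hj
      rw [updateCol_self, hσ, h]
    · rw [updateCol_ne hj]
  · have h1 : (fun j => updateCol M i (Pi.single i 1) (σ j) j) i = 0 := by
      simp only [updateCol_self, Pi.single_apply, if_neg hσ]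
    have hinv : σ⁻¹ i ≠ i := fun hc => hσ (by conv_lhs => rw [← hc, show σ (σ⁻¹ i) = i from by simp])
    have h2 : (fun j => M (σ j) j) (σ⁻¹ i) = 0 := by
      simp only [show σ (σ⁻¹ i) = i from by simp, h, Pi.single_apply]
      rw [if_neg hinv]
    have p1 : ∏ j, updateCol M i (Pi.single i 1) (σ j) j = 0 :=
      Finset.prod_eq_zero (Finset.mem_univ i) h1
    have p2 : ∏ j, M (σ j) j = 0 := Finset.prod_eq_zero (Finset.mem_univ (σ⁻¹ i)) h2
    rw [p1, p2]

lemma adjugate_diag_eq {n : Type*} [DecidableEq n] [Fintype n]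
    (A A' : Matrix n n ℝ) (i : n) (h : ∀ r c, r ≠ i → c ≠ i → A r c = A' r c) :
    adjugate A i i = adjugate A' i i := by
  rw [adjugate_apply, adjugate_apply]
  rw [← det_updateColumn_of_row_single (A.updateRow i (Pi.single i 1)) i (updateRow_self),
      ← det_updateColumn_of_row_single (A'.updateRow i (Pi.single i 1)) i (updateRow_self)]
  congr 1
  ext r c
  by_cases hc : c = i
  · subst hc; simp [updateCol_apply]
  · rw [updateCol_ne hc, updateCol_ne hc]
    by_cases hr : r = i
    · subst hr; rw [updateRow_self, updateRow_self]
    · rw [updateRow_ne hr, updateRow_ne hr]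
      exact h r c hr hc

lemma key_bounds {k : ℕ} (ε : ℝ) (hε : 0 < ε) (i : Fin k) (A : Matrix (Fin k) (Fin k) ℝ)
    (hA : A.PosDef) (hAe : ∀ x : Fin k → ℝ, ε * (x ⬝ᵥ x) ≤ x ⬝ᵥ (A *ᵥ x))
    (hAi : A i i = 1 + ε) :
    ε * adjugate A i i ≤ det A ∧ det A ≤ (1 + ε) * adjugate A i i ∧ 0 < adjugate A i i := by
  have hdet : 0 < A.det := hA.det_pos
  have hdu : IsUnit A.det := hdet.ne'.isUnit
  set e : Fin k → ℝ := Pi.single i 1 with he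
  set x : Fin k → ℝ := A⁻¹ *ᵥ e with hxdef
  have hx : A *ᵥ x = e := by
    rw [hxdef, mulVec_mulVec, mul_nonsing_inv A hdu, one_mulVec]
  have hxi : x i = A⁻¹ i i := by
    simp [hxdef, he, mulVec, dotProduct, Pi.single_apply]
  set t : ℝ := A⁻¹ i i with ht
  have hq : x ⬝ᵥ (A *ᵥ x) = t := by
    rw [hx, he, dotProduct_single, mul_one, hxi]
  have hxne : x ≠ 0 := by
    intro h0
    have : e i = 0 := by rw [← hx, h0, mulVec_zero]; rfl
    simp [he] at this
  have htpos : 0 < t := by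
    have := hA.dotProduct_mulVec_pos hxne
    simpa [hq] using this
  -- upper bound: ε * t ≤ 1
  have hxx : (x i) ^ 2 ≤ x ⬝ᵥ x := by
    have : x ⬝ᵥ x = ∑ j, (x j) ^ 2 := by simp [dotProduct, sq]
    rw [this]
    exact Finset.single_le_sum (fun j _ => sq_nonneg (x j)) (Finset.mem_univ i)
  have hub : ε * t ≤ 1 := by
    have h1 : ε * (x ⬝ᵥ x) ≤ t := by rw [← hq]; exact hAe x
    have h2 : ε * (x i) ^ 2 ≤ ε * (x ⬝ᵥ x) := mul_le_mul_of_nonneg_left hxx hε.le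
    have h3 : ε * t ^ 2 ≤ t := by
      calc ε * t ^ 2 = ε * (x i) ^ 2 := by rw [hxi]
      _ ≤ ε * (x ⬝ᵥ x) := h2
      _ ≤ t := h1
    have h4 : (ε * t) * t ≤ 1 * t := by nlinarith
    exact le_of_mul_le_mul_right h4 htpos
  -- lower bound: 1 ≤ (1 + ε) * t
  have heAe : e ⬝ᵥ (A *ᵥ e) = 1 + ε := by
    simp [he, mulVec, dotProduct, Pi.single_apply, hAi]
  have heAx : e ⬝ᵥ (A *ᵥ x) = 1 := by simp [hx, he, dotProduct, Pi.single_apply]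
  have hxAe : x ⬝ᵥ (A *ᵥ e) = 1 := by
    rw [dotProduct_mulVec, ← mulVec_transpose]
    have hsym : Aᵀ = A := by
      have := hA.isHermitian
      exact isHermitian_iff_isSymm.mp this
    rw [hsym, hx]
    simp [he, dotProduct, Pi.single_apply]
  have hlb : 1 ≤ (1 + ε) * t := by
    have h0 : 0 ≤ (e - t⁻¹ • x) ⬝ᵥ (A *ᵥ (e - t⁻¹ • x)) := by
      have := hA.posSemidef.dotProduct_mulVec_nonneg (e - t⁻¹ • x)
      simpa using this
    have hexp : (e - t⁻¹ • x) ⬝ᵥ (A *ᵥ (e - t⁻¹ • x))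
        = (1 + ε) - t⁻¹ * 1 - t⁻¹ * 1 + t⁻¹ * (t⁻¹ * t) := by
      rw [mulVec_sub, mulVec_smul, dotProduct_sub, sub_dotProduct, sub_dotProduct,
        dotProduct_smul, smul_dotProduct, smul_dotProduct, dotProduct_smul,
        heAe, heAx, hxAe, hq]
      simp only [smul_eq_mul]
      ring
    rw [hexp] at h0
    have : t⁻¹ * t = 1 := inv_mul_cancel₀ htpos.ne'
    rw [this] at h0
    have h2 : t⁻¹ ≤ 1 + ε := by nlinarith
    calc 1 = t⁻¹ * t := this.symm
    _ ≤ (1 + ε) * t := by nlinarith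
  -- adjugate relation
  have hadj : adjugate A i i = det A * t := by
    have : A⁻¹ = A.det⁻¹ • adjugate A := by rw [inv_def, Ring.inverse_eq_inv]
    have h2 : t = A.det⁻¹ * adjugate A i i := by rw [ht, this]; rfl
    field_simp [hdet.ne'] at h2 ⊢
    linarith [h2]
  have hadjpos : 0 < adjugate A i i := by rw [hadj]; positivity
  refine ⟨?_, ?_, hadjpos⟩
  · rw [hadj]; nlinarith
  · rw [hadj]; nlinarith

section helper
variable {k d : ℕ} (ε : ℝ)

lemma gram_posdef (hε : 0 < ε) (Φ : Matrix (Fin k) (Fin d) ℝ) :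
    (Φ * Φᵀ + ε • (1 : Matrix (Fin k) (Fin k) ℝ)).PosDef := by
  have h1 : (Φ * Φᵀ).PosSemidef := by
    have := posSemidef_self_mul_conjTranspose Φ
    have he : Φᴴ = Φᵀ := by ext r c; simp [conjTranspose_apply]
    rwa [he] at this
  have h2 : (ε • (1 : Matrix (Fin k) (Fin k) ℝ)).PosDef := by
    rw [smul_one_eq_diagonal]
    exact posDef_diagonal_iff.mpr fun _ => hε
  exact Matrix.PosDef.posSemidef_add h1 h2

lemma gram_diag (Φ : Matrix (Fin k) (Fin d) ℝ) (i : Fin k) (hrow : ∑ l, (Φ i l) ^ 2 = 1) :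
    (Φ * Φᵀ + ε • (1 : Matrix (Fin k) (Fin k) ℝ)) i i = 1 + ε := by
  simp [Matrix.add_apply, Matrix.mul_apply, Matrix.smul_apply, Matrix.one_apply, ← sq, hrow]

lemma gram_quad (hε : 0 < ε) (Φ : Matrix (Fin k) (Fin d) ℝ) (x : Fin k → ℝ) :
    ε * (x ⬝ᵥ x) ≤ x ⬝ᵥ ((Φ * Φᵀ + ε • (1 : Matrix (Fin k) (Fin k) ℝ)) *ᵥ x) := by
  have h1 : (Φ * Φᵀ).PosSemidef := by
    have := posSemidef_self_mul_conjTranspose Φ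
    have he : Φᴴ = Φᵀ := by ext r c; simp [conjTranspose_apply]
    rwa [he] at this
  have h2 : 0 ≤ x ⬝ᵥ ((Φ * Φᵀ) *ᵥ x) := by simpa using h1.dotProduct_mulVec_nonneg x
  rw [add_mulVec, dotProduct_add, smul_mulVec, one_mulVec, dotProduct_smul, smul_eq_mul]
  linarith

end helper

/-- **Bounded difference of the log-determinant of the regularized Gram matrix.** If `Φ` and
`Φ'` have unit-norm rows and agree in every row except possibly row `i`, then
`|log det (Φ' Φ'ᵀ + ε I) - log det (Φ Φᵀ + ε I)| ≤ log ((1 + ε) / ε)`. -/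
theorem logdet_bounded_difference {k d : ℕ} (hk : 1 ≤ k) (hd : 1 ≤ d)
    (ε : ℝ) (hε : 0 < ε) (i : Fin k) (Φ Φ' : Matrix (Fin k) (Fin d) ℝ)
    (hrows : ∀ j, ∑ l, (Φ j l) ^ 2 = 1) (hrows' : ∀ j, ∑ l, (Φ' j l) ^ 2 = 1)
    (hagree : ∀ j, j ≠ i → Φ j = Φ' j) :
    |Real.log ((Φ' * Φ'ᵀ + ε • (1 : Matrix (Fin k) (Fin k) ℝ)).det)
        - Real.log ((Φ * Φᵀ + ε • (1 : Matrix (Fin k) (Fin k) ℝ)).det)|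
      ≤ Real.log ((1 + ε) / ε) := by
  set A : Matrix (Fin k) (Fin k) ℝ := Φ * Φᵀ + ε • 1 with hA
  set A' : Matrix (Fin k) (Fin k) ℝ := Φ' * Φ'ᵀ + ε • 1 with hA'
  obtain ⟨l1, u1, p1⟩ := key_bounds ε hε i A (gram_posdef ε hε Φ)
    (gram_quad ε hε Φ) (gram_diag ε Φ i (hrows i))
  obtain ⟨l2, u2, p2⟩ := key_bounds ε hε i A' (gram_posdef ε hε Φ')
    (gram_quad ε hε Φ') (gram_diag ε Φ' i (hrows' i))
  have hadjeq : adjugate A i i = adjugate A' i i := by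
    apply adjugate_diag_eq
    intro r c hr hc
    have h1 : Φ r = Φ' r := hagree r hr
    have h2 : Φ c = Φ' c := hagree c hc
    simp [hA, hA', Matrix.add_apply, Matrix.mul_apply, h1, h2]
  set a : ℝ := adjugate A i i with ha
  rw [← hadjeq] at l2 u2 p2
  have hd1 : 0 < A.det := (gram_posdef ε hε Φ).det_pos
  have hd2 : 0 < A'.det := (gram_posdef ε hε Φ').det_pos
  have h1e : (0:ℝ) < 1 + ε := by linarith
  have logdiv : Real.log ((1 + ε) / ε) = Real.log (1 + ε) - Real.log ε :=
    Real.log_div h1e.ne' hε.ne'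
  have lb1 : Real.log ε + Real.log a ≤ Real.log A.det := by
    rw [← Real.log_mul hε.ne' p1.ne']
    exact (Real.log_le_log_iff (by positivity) hd1).mpr l1
  have ub1 : Real.log A.det ≤ Real.log (1 + ε) + Real.log a := by
    rw [← Real.log_mul h1e.ne' p1.ne']
    exact (Real.log_le_log_iff hd1 (by positivity)).mpr u1
  have lb2 : Real.log ε + Real.log a ≤ Real.log A'.det := by
    rw [← Real.log_mul hε.ne' p1.ne']
    exact (Real.log_le_log_iff (by positivity) hd2).mpr l2
  have ub2 : Real.log A'.det ≤ Real.log (1 + ε) + Real.log a := by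
    rw [← Real.log_mul h1e.ne' p1.ne']
    exact (Real.log_le_log_iff hd2 (by positivity)).mpr u2
  rw [abs_sub_le_iff, logdiv]
  constructor <;> linarith
end

section
/- Fix k ≥ 1, d ≥ 1, ε > 0 and α ≥ 0, and define for any Φ ∈ ℝ^{k×d} with unit-norm rows and any p ∈ [0,1]^k the score V(Φ,p) := (1/(2k))·log det(ΦΦᵀ + εI_k) + (α/k)·Σ_{i=1}^{k}(1−pᵢ). If (Φ,p) and (Φ′,p′) are two such inputs that agree in all samples except possibly the i-th one (i.e., all rows of Φ and Φ′ other than row i coincide and p_j = p′_j for all j ≠ i), then |V(Φ,p) − V(Φ′,p′)| ≤ L/k, where L := α + (1/2)·log(1 + 1/ε). -/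
open Matrix

theorem gram_posDef {n' d : Type*} [Fintype n'] [DecidableEq n'] [Fintype d]
    (ε : ℝ) (hε : 0 < ε) (M : Matrix n' d ℝ) :
    (M * Mᵀ + ε • (1 : Matrix n' n' ℝ)).PosDef := by
  have h1 : (M * Mᵀ).PosSemidef := by
    simpa using Matrix.posSemidef_self_mul_conjTranspose M
  have h2 : (ε • (1 : Matrix n' n' ℝ)).PosDef := by
    have : (ε • (1 : Matrix n' n' ℝ)) = Matrix.diagonal (fun _ => ε) := by
      simp [Matrix.smul_one_eq_diagonal]
    rw [this]
    exact Matrix.posDef_diagonal_iff.mpr fun _ => hε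
  exact Matrix.PosDef.posSemidef_add h1 h2

noncomputable def rowsA {k d : ℕ} (ε : ℝ) (i : Fin k) (Φ : Matrix (Fin k) (Fin d) ℝ) :
    Matrix {j : Fin k // j ≠ i} {j : Fin k // j ≠ i} ℝ :=
  (Matrix.of fun (a : {j : Fin k // j ≠ i}) l => Φ a.1 l) *
    (Matrix.of fun (a : {j : Fin k // j ≠ i}) (l : Fin d) => Φ a.1 l)ᵀ + ε • 1

theorem key {k d : ℕ} (ε : ℝ) (hε : 0 < ε) (i : Fin k) (Φ : Matrix (Fin k) (Fin d) ℝ)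
    (hrow : ∑ l, (Φ i l) ^ 2 = 1) :
    ∃ s : ℝ, ε ≤ s ∧ s ≤ 1 + ε ∧
      (Φ * Φᵀ + ε • (1 : Matrix (Fin k) (Fin k) ℝ)).det = (rowsA ε i Φ).det * s := by
  classical
  haveI : Unique {j : Fin k // ¬ j ≠ i} :=
    ⟨⟨⟨i, by simp⟩⟩, fun a => Subtype.ext (not_not.mp a.2)⟩
  set G := Φ * Φᵀ + ε • (1 : Matrix (Fin k) (Fin k) ℝ) with hG
  set A := rowsA ε i Φ with hAdef
  set B : Matrix {j : Fin k // j ≠ i} {j : Fin k // ¬ j ≠ i} ℝ :=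
    Matrix.of (fun a b => ∑ l, Φ a.1 l * Φ b.1 l) with hBdef
  have hA : A.PosDef := gram_posDef ε hε _
  haveI : Invertible A := A.invertibleOfIsUnitDet (isUnit_iff_ne_zero.mpr hA.det_pos.ne')
  set e : {j : Fin k // j ≠ i} ⊕ {j : Fin k // ¬ j ≠ i} ≃ Fin k :=
    Equiv.sumCompl (fun j => j ≠ i) with he
  have hBH : ∀ b a, Bᴴ b a = ∑ l, Φ a.1 l * Φ b.1 l := by
    intro b a
    simp [hBdef, Matrix.conjTranspose_apply, mul_comm]
  have hsub : G.submatrix e e =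
      fromBlocks A B Bᴴ (Matrix.of fun _ _ => 1 + ε) := by
    ext a b
    rcases a with a | a <;> rcases b with b | b <;>
      simp only [Matrix.submatrix_apply, he, Equiv.sumCompl_apply_inl,
        Equiv.sumCompl_apply_inr, fromBlocks_apply₁₁, fromBlocks_apply₁₂,
        fromBlocks_apply₂₁, fromBlocks_apply₂₂, hG, hAdef, rowsA, hBdef,
        Matrix.add_apply, Matrix.mul_apply, Matrix.transpose_apply,
        Matrix.smul_apply, Matrix.one_apply, Matrix.of_apply, smul_eq_mul]
    · congr 2
      exact if_congr Subtype.val_inj rfl rfl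
    · have hb : b.1 = i := not_not.mp b.2
      simp [hb, a.2]
    · have ha : a.1 = i := not_not.mp a.2
      rw [hBH]
      simp only [ha, (by exact (Ne.symm b.2) : ¬ (i = b.1)), if_false, mul_zero, add_zero]
      exact Finset.sum_congr rfl fun l _ => mul_comm _ _
    · have ha : a.1 = i := not_not.mp a.2
      have hb : b.1 = i := not_not.mp b.2
      have : ∑ l, Φ a.1 l * Φ b.1 l = 1 := by
        rw [ha, hb]; simpa [pow_two] using hrow
      simp only [ha, hb, if_true, mul_one]
      rw [show (1:ℝ) + ε = 1 + ε from rfl]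
      congr 1
      simpa [ha, hb] using this
  have hdet : G.det = A.det * (Matrix.of (fun _ _ => (1:ℝ) + ε) - Bᴴ * A⁻¹ * B).det := by
    rw [← Matrix.det_submatrix_equiv_self e G, hsub, Matrix.det_fromBlocks₁₁,
      Matrix.invOf_eq_nonsing_inv]
  set S := (Matrix.of (fun _ _ => (1:ℝ) + ε) - Bᴴ * A⁻¹ * B) with hSdef
  have hdet1 : S.det = S default default := Matrix.det_unique S
  set q : ℝ := (Bᴴ * A⁻¹ * B) default default with hq
  have hSdd : S default default = 1 + ε - q := by rw [hSdef, hq]; rfl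
  have hq0 : 0 ≤ q := by
    have hi := (hA.inv).posSemidef.dotProduct_mulVec_nonneg (fun a => B a default)
    have heq : (Bᴴ * A⁻¹ * B) default default
        = (star (fun a => B a default)) ⬝ᵥ (A⁻¹ *ᵥ (fun a => B a default)) := by
      simp only [Matrix.mul_apply, Matrix.mulVec, dotProduct,
        Matrix.conjTranspose_apply, star_trivial, Pi.star_apply, Finset.sum_mul,
        Finset.mul_sum]
      rw [Finset.sum_comm]
      exact Finset.sum_congr rfl fun a _ => Finset.sum_congr rfl fun b _ => by ring
    rw [hq, heq]; exact hi
  have hq1 : q ≤ 1 := by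
    have hG0 : (Φ * Φᵀ + Matrix.diagonal (fun j => if j = i then 0 else ε)).PosSemidef := by
      apply Matrix.PosSemidef.add
      · simpa using Matrix.posSemidef_self_mul_conjTranspose Φ
      · exact Matrix.posSemidef_diagonal_iff.mpr fun j => by
          by_cases h : j = i <;> simp [h, hε.le]
    have hsub0 : (Φ * Φᵀ + Matrix.diagonal (fun j => if j = i then 0 else ε)).submatrix e e =
        fromBlocks A B Bᴴ (Matrix.of fun _ _ => (1:ℝ)) := by
      ext a b
      rcases a with a | a <;> rcases b with b | b <;>
        simp only [Matrix.submatrix_apply, he, Equiv.sumCompl_apply_inl,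
          Equiv.sumCompl_apply_inr, fromBlocks_apply₁₁, fromBlocks_apply₁₂,
          fromBlocks_apply₂₁, fromBlocks_apply₂₂, hAdef, rowsA, hBdef,
          Matrix.add_apply, Matrix.mul_apply, Matrix.transpose_apply, Matrix.diagonal_apply,
          Matrix.smul_apply, Matrix.one_apply, Matrix.of_apply, smul_eq_mul]
      · congr 1
        rw [if_congr Subtype.val_inj rfl rfl]
        by_cases hab : a = b
        · simp [hab, (by exact b.2 : ¬ ((b.1 : Fin k) = i))]
        · simp [hab]
      · have hb : b.1 = i := not_not.mp b.2
        have hne : ¬ ((a.1 : Fin k) = b.1) := fun h => a.2 (h.trans hb)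
        simp [hne]
      · have ha : a.1 = i := not_not.mp a.2
        have hne : ¬ ((a.1 : Fin k) = b.1) := fun h => b.2 (h.symm.trans ha)
        rw [hBH]
        simp only [hne, if_false, mul_zero, add_zero]
        exact Finset.sum_congr rfl fun l _ => mul_comm _ _
      · have ha : a.1 = i := not_not.mp a.2
        have hb : b.1 = i := not_not.mp b.2
        have h1 : ∑ l, Φ a.1 l * Φ b.1 l = 1 := by
          rw [ha, hb]; simpa [pow_two] using hrow
        simp only [ha, hb, if_pos rfl, if_true]
        simpa [ha, hb] using h1
    have hps : (fromBlocks A B Bᴴ (Matrix.of fun _ _ => (1:ℝ))).PosSemidef := by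
      rw [← hsub0]
      exact (Matrix.posSemidef_submatrix_equiv e).mpr hG0
    have hschur := ((Matrix.PosDef.fromBlocks₁₁ B _ hA).mp hps).dotProduct_mulVec_nonneg (fun _ => (1:ℝ))
    have hcalc : (star (fun _ => (1:ℝ))) ⬝ᵥ
        (((Matrix.of fun _ _ => (1:ℝ)) - Bᴴ * A⁻¹ * B) *ᵥ (fun _ => (1:ℝ))) = 1 - q := by
      simp [Matrix.mulVec, dotProduct, Matrix.sub_apply, Finset.univ_unique, hq]
    rw [hcalc] at hschur
    linarith
  refine ⟨S default default, ?_, ?_, ?_⟩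
  · rw [hSdd]; linarith
  · rw [hSdd]; linarith
  · rw [hdet, hdet1]

theorem logdiff (ε : ℝ) (hε : 0 < ε) {s s' : ℝ} (h1 : ε ≤ s) (h2 : s ≤ 1 + ε)
    (h1' : ε ≤ s') (h2' : s' ≤ 1 + ε) :
    |Real.log s - Real.log s'| ≤ Real.log (1 + 1 / ε) := by
  have hεp : (0:ℝ) < 1 + ε := by linarith
  have key : ∀ t : ℝ, ε ≤ t → t ≤ 1 + ε →
      Real.log ε ≤ Real.log t ∧ Real.log t ≤ Real.log (1 + ε) := by
    intro t ht1 ht2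
    have htp : 0 < t := lt_of_lt_of_le hε ht1
    exact ⟨(Real.log_le_log_iff hε htp).mpr ht1, (Real.log_le_log_iff htp hεp).mpr ht2⟩
  obtain ⟨ha1, ha2⟩ := key s h1 h2
  obtain ⟨hb1, hb2⟩ := key s' h1' h2'
  have hrw : Real.log (1 + 1 / ε) = Real.log (1 + ε) - Real.log ε := by
    rw [show (1:ℝ) + 1 / ε = (1 + ε) / ε by field_simp; ring]
    exact Real.log_div hεp.ne' hε.ne'
  rw [hrw, abs_sub_le_iff]
  constructor <;> linarith


/-- The UMPIRE score `V(Φ, p) = (1/(2k)) log det (Φ Φᵀ + ε I_k) + (α/k) ∑ i, (1 - p i)`. -/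
noncomputable def umpireV {k d : ℕ} (ε α : ℝ) (Φ : Matrix (Fin k) (Fin d) ℝ)
    (p : Fin k → ℝ) : ℝ :=
  (1 / (2 * (k : ℝ))) * Real.log ((Φ * Φᵀ + ε • (1 : Matrix (Fin k) (Fin k) ℝ)).det)
    + (α / (k : ℝ)) * ∑ i, (1 - p i)

/-- **Single-sample bounded difference of the UMPIRE score.** If the inputs `(Φ, p)` and
`(Φ', p')` (with unit-norm rows and probabilities in `[0,1]`) agree in all samples except
possibly the `i`-th, then `|V(Φ,p) - V(Φ',p')| ≤ L / k` where
`L = α + (1/2) log (1 + 1/ε)`. -/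
theorem umpireV_bounded_difference {k d : ℕ} (hk : 1 ≤ k) (hd : 1 ≤ d)
    (ε α : ℝ) (hε : 0 < ε) (hα : 0 ≤ α) (i : Fin k)
    (Φ Φ' : Matrix (Fin k) (Fin d) ℝ) (p p' : Fin k → ℝ)
    (hrows : ∀ j, ∑ l, (Φ j l) ^ 2 = 1) (hrows' : ∀ j, ∑ l, (Φ' j l) ^ 2 = 1)
    (hp : ∀ j, p j ∈ Set.Icc (0 : ℝ) 1) (hp' : ∀ j, p' j ∈ Set.Icc (0 : ℝ) 1)
    (hagreeΦ : ∀ j, j ≠ i → Φ j = Φ' j) (hagreep : ∀ j, j ≠ i → p j = p' j) :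
    |umpireV ε α Φ p - umpireV ε α Φ' p'|
      ≤ (α + (1 / 2) * Real.log (1 + 1 / ε)) / (k : ℝ) := by
  have hk0 : (0:ℝ) < (k:ℝ) := by exact_mod_cast Nat.pos_of_ne_zero (by omega)
  obtain ⟨s, hs1, hs2, hdet⟩ := key ε hε i Φ (hrows i)
  obtain ⟨s', hs1', hs2', hdet'⟩ := key ε hε i Φ' (hrows' i)
  have hAeq : rowsA ε i Φ' = rowsA ε i Φ := by
    ext a b
    simp only [rowsA, Matrix.add_apply, Matrix.mul_apply, Matrix.transpose_apply,
      Matrix.of_apply]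
    rw [← hagreeΦ a.1 a.2, ← hagreeΦ b.1 b.2]
  rw [hAeq] at hdet'
  have hApos : 0 < (rowsA ε i Φ).det := (gram_posDef ε hε _).det_pos
  have hsp : 0 < s := lt_of_lt_of_le hε hs1
  have hsp' : 0 < s' := lt_of_lt_of_le hε hs1'
  have hlog : Real.log ((Φ * Φᵀ + ε • (1 : Matrix (Fin k) (Fin k) ℝ)).det)
      = Real.log (rowsA ε i Φ).det + Real.log s := by
    rw [hdet, Real.log_mul hApos.ne' hsp.ne']
  have hlog' : Real.log ((Φ' * Φ'ᵀ + ε • (1 : Matrix (Fin k) (Fin k) ℝ)).det)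
      = Real.log (rowsA ε i Φ).det + Real.log s' := by
    rw [hdet', Real.log_mul hApos.ne' hsp'.ne']
  have hsum : (∑ j, (1 - p j)) - (∑ j, (1 - p' j)) = p' i - p i := by
    rw [← Finset.sum_sub_distrib, Finset.sum_eq_single i]
    · ring
    · intro j _ hj
      rw [hagreep j hj]; ring
    · simp
  have hdiff : umpireV ε α Φ p - umpireV ε α Φ' p'
      = (1 / (2 * (k:ℝ))) * (Real.log s - Real.log s') + (α / (k:ℝ)) * (p' i - p i) := by
    simp only [umpireV, hlog, hlog']
    rw [← hsum]
    ring
  rw [hdiff]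
  have h1 : |Real.log s - Real.log s'| ≤ Real.log (1 + 1 / ε) :=
    logdiff ε hε hs1 hs2 hs1' hs2'
  have h2 : |p' i - p i| ≤ 1 := by
    obtain ⟨ha, hb⟩ := hp i
    obtain ⟨ha', hb'⟩ := hp' i
    rw [abs_le]; constructor <;> linarith
  calc |(1 / (2 * (k:ℝ))) * (Real.log s - Real.log s') + (α / (k:ℝ)) * (p' i - p i)|
      ≤ |(1 / (2 * (k:ℝ))) * (Real.log s - Real.log s')| + |(α / (k:ℝ)) * (p' i - p i)| :=
        abs_add_le _ _
    _ = (1 / (2 * (k:ℝ))) * |Real.log s - Real.log s'| + (α / (k:ℝ)) * |p' i - p i| := by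
        rw [abs_mul, abs_mul, abs_of_nonneg (by positivity : (0:ℝ) ≤ 1 / (2 * (k:ℝ))),
          abs_of_nonneg (by positivity : (0:ℝ) ≤ α / (k:ℝ))]
    _ ≤ (1 / (2 * (k:ℝ))) * Real.log (1 + 1 / ε) + (α / (k:ℝ)) * 1 := by
        gcongr <;> positivity
    _ = (α + (1 / 2) * Real.log (1 + 1 / ε)) / (k : ℝ) := by
        field_simp
        ring
end
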